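/- Fix ν > 0 and let g_c = √(2ν/π). For the function E(c) = ν log(2/√(2πν)) − ν( f(t) + (1/4) f'(t)² ) + g( √(ν/2) f'(t) + √(2ν) t ) with t = c/√(2ν) and f(t) = log(1 + erf(t)): if g = g_c, then c = 0 is the unique critical point of E, i.e., f'(0) = √(2/ν) g_c. -/

import Mathlib

/-! With `e = exp (-x²)` and `I x = ∫ s in Ioi x, exp (-s²)`, the functions `e - 2xI`,
`(1 + 2x²) I - x e` and `2I (I + x e) - e²` vanish at `+∞` and have derivatives `-2I`,
`-2 (e - 2xI)` and `-2e ((1 + 2x²) I - x e)`: each one is decreasing because the previous one is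
positive, hence is positive itself.

Since `1 + erf t = (2/√π) I(-t)`, one has `f' t = exp (-t²) / I(-t)` and `f'' = -f' (f' + 2t)`.
The first inequality gives `f'' < 0` and the third `1 + f''/2 > 0`, so
`dE/dc = √(ν/2) (√(2/ν) g - f'(t)) (1 + f''(t)/2)` vanishes for `g = g_c` exactly where
`f'(t) = f'(0)`, i.e. at `t = 0`. -/

open Real MeasureTheory

/-- The error function `erf x = (2/√π) ∫₀ˣ exp(−t²) dt`. -/
noncomputable def erf (x : ℝ) : ℝ := (2 / Real.sqrt Real.pi) * ∫ t in (0:ℝ)..x, Real.exp (-t^2)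

/-- `f(t) = log(1 + erf t)`. -/
noncomputable def fErf (t : ℝ) : ℝ := Real.log (1 + erf t)

/-- `f'(t) = (2/√π) exp(−t²)/(1 + erf t)`. -/
noncomputable def fErf' (t : ℝ) : ℝ := (2 / Real.sqrt Real.pi) * Real.exp (-t^2) / (1 + erf t)

/-- The reduced energy `E(c)` on the family of truncated Gaussians, with `t = c/√(2ν)`. -/
noncomputable def Eenergy (ν g c : ℝ) : ℝ :=
  ν * Real.log (2 / Real.sqrt (2 * Real.pi * ν))
    - ν * (fErf (c / Real.sqrt (2 * ν)) + (1/4) * (fErf' (c / Real.sqrt (2 * ν))) ^ 2)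
    + g * (Real.sqrt (ν / 2) * fErf' (c / Real.sqrt (2 * ν))
        + Real.sqrt (2 * ν) * (c / Real.sqrt (2 * ν)))

open Set Filter Topology

noncomputable def gaussTail (x : ℝ) : ℝ := ∫ s in Ioi x, exp (-s ^ 2)

lemma integrable_exp_neg_sq : Integrable fun s : ℝ => exp (-s ^ 2) := by
  simpa using integrable_exp_neg_mul_sq (b := 1) one_pos

lemma hasDerivAt_exp_neg_sq (x : ℝ) :
    HasDerivAt (fun x => exp (-x ^ 2)) (-2 * x * exp (-x ^ 2)) x := by
  convert (hasDerivAt_pow 2 x).fun_neg.exp using 1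
  push_cast
  ring

lemma gaussTail_pos (x : ℝ) : 0 < gaussTail x := by
  rw [gaussTail, setIntegral_pos_iff_support_of_nonneg_ae
    (.of_forall fun s => (exp_pos _).le) integrable_exp_neg_sq.integrableOn]
  simp [Function.support, exp_ne_zero]

lemma gaussTail_eq_sub (x : ℝ) : gaussTail x = √π / 2 - ∫ s in 0..x, exp (-s ^ 2) := by
  have h0 : gaussTail 0 = √π / 2 := by simpa [gaussTail] using integral_gaussian_Ioi 1
  rw [← h0, gaussTail, gaussTail, ← intervalIntegral.integral_interval_add_Ioi
    integrable_exp_neg_sq.integrableOn integrable_exp_neg_sq.integrableOn,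
    intervalIntegral.integral_symm]
  ring

lemma hasDerivAt_gaussTail (x : ℝ) : HasDerivAt gaussTail (-exp (-x ^ 2)) x := by
  rw [funext gaussTail_eq_sub]
  exact (intervalIntegral.integral_hasDerivAt_right integrable_exp_neg_sq.intervalIntegrable
    integrable_exp_neg_sq.aestronglyMeasurable.stronglyMeasurableAtFilter
    (by fun_prop)).const_sub _

lemma gaussTail_le_exp_neg {x : ℝ} (hx : 1 ≤ x) : gaussTail x ≤ exp (-x) := by
  rw [← integral_exp_neg_Ioi]
  refine setIntegral_mono_on integrable_exp_neg_sq.integrableOn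
    (by simpa using exp_neg_integrableOn_Ioi x one_pos)
    measurableSet_Ioi fun s hs => exp_le_exp.2 ?_
  nlinarith [hx.trans hs.out.le]

lemma tendsto_pow_mul_of_le_exp_neg {h : ℝ → ℝ} (h0 : ∀ x, 0 ≤ h x)
    (hle : ∀ᶠ x in atTop, h x ≤ exp (-x)) (k : ℕ) :
    Tendsto (fun x => x ^ k * h x) atTop (𝓝 0) := by
  refine tendsto_of_tendsto_of_tendsto_of_le_of_le' tendsto_const_nhds
    (tendsto_pow_mul_exp_neg_atTop_nhds_zero k) ?_ ?_
  · filter_upwards [eventually_ge_atTop 0] with x hx using mul_nonneg (pow_nonneg hx k) (h0 x)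
  · filter_upwards [hle, eventually_ge_atTop 0] with x hx hx0
    exact mul_le_mul_of_nonneg_left hx (pow_nonneg hx0 k)

lemma tendsto_pow_mul_gaussTail (k : ℕ) :
    Tendsto (fun x => x ^ k * gaussTail x) atTop (𝓝 0) :=
  tendsto_pow_mul_of_le_exp_neg (fun x => (gaussTail_pos x).le)
    ((eventually_ge_atTop 1).mono fun _ => gaussTail_le_exp_neg) k

lemma tendsto_pow_mul_exp_neg_sq (k : ℕ) :
    Tendsto (fun x => x ^ k * exp (-x ^ 2)) atTop (𝓝 0) :=
  tendsto_pow_mul_of_le_exp_neg (fun x => (exp_pos _).le)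
    ((eventually_ge_atTop 1).mono fun x hx => exp_le_exp.2 (by nlinarith)) k

lemma pos_of_hasDerivAt_neg_of_tendsto_zero {h h' : ℝ → ℝ}
    (hd : ∀ x, HasDerivAt h (h' x) x) (hneg : ∀ x, h' x < 0)
    (hlim : Tendsto h atTop (𝓝 0)) (x : ℝ) : 0 < h x := by
  have hanti : StrictAnti h := strictAnti_of_deriv_neg fun x => (hd x).deriv ▸ hneg x
  exact (hanti.antitone.le_of_tendsto hlim (x + 1)).trans_lt (hanti (lt_add_one x))

lemma two_mul_mul_gaussTail_lt_exp (x : ℝ) : 2 * x * gaussTail x < exp (-x ^ 2) := by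
  have hd (x : ℝ) : HasDerivAt (fun x => exp (-x ^ 2) - 2 * x * gaussTail x)
      (-2 * gaussTail x) x :=
    ((hasDerivAt_exp_neg_sq x).fun_sub (((hasDerivAt_id' x).const_mul 2).fun_mul
      (hasDerivAt_gaussTail x))).congr_deriv (by ring)
  have hlim : Tendsto (fun x => exp (-x ^ 2) - 2 * x * gaussTail x) atTop (𝓝 0) := by
    simpa [mul_assoc] using
      (tendsto_pow_mul_exp_neg_sq 0).sub ((tendsto_pow_mul_gaussTail 1).const_mul 2)
  linarith [pos_of_hasDerivAt_neg_of_tendsto_zero hd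
    (fun x => by linarith [gaussTail_pos x]) hlim x]

lemma mul_exp_lt_mul_gaussTail (x : ℝ) : x * exp (-x ^ 2) < (1 + 2 * x ^ 2) * gaussTail x := by
  have hd (x : ℝ) : HasDerivAt (fun x => (1 + 2 * x ^ 2) * gaussTail x - x * exp (-x ^ 2))
      (-2 * (exp (-x ^ 2) - 2 * x * gaussTail x)) x := by
    refine ((((hasDerivAt_pow 2 x).const_mul 2).const_add 1).fun_mul
      (hasDerivAt_gaussTail x)).fun_sub ((hasDerivAt_id' x).fun_mul (hasDerivAt_exp_neg_sq x))
      |>.congr_deriv ?_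
    norm_num
    ring
  have hlim : Tendsto (fun x => (1 + 2 * x ^ 2) * gaussTail x - x * exp (-x ^ 2))
      atTop (𝓝 0) := by
    convert ((tendsto_pow_mul_gaussTail 0).add ((tendsto_pow_mul_gaussTail 2).const_mul 2)).sub
      (tendsto_pow_mul_exp_neg_sq 1) using 2 <;> simp; ring
  linarith [pos_of_hasDerivAt_neg_of_tendsto_zero hd
    (fun x => by linarith [two_mul_mul_gaussTail_lt_exp x]) hlim x]

lemma exp_sq_lt_two_mul_gaussTail_mul (x : ℝ) :
    exp (-x ^ 2) ^ 2 < 2 * gaussTail x * (gaussTail x + x * exp (-x ^ 2)) := by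
  have hd (x : ℝ) : HasDerivAt
      (fun x => 2 * gaussTail x * (gaussTail x + x * exp (-x ^ 2)) - exp (-x ^ 2) ^ 2)
      (-2 * exp (-x ^ 2) * ((1 + 2 * x ^ 2) * gaussTail x - x * exp (-x ^ 2))) x := by
    refine (((hasDerivAt_gaussTail x).const_mul 2).fun_mul ((hasDerivAt_gaussTail x).fun_add
      ((hasDerivAt_id' x).fun_mul (hasDerivAt_exp_neg_sq x)))).fun_sub
      ((hasDerivAt_exp_neg_sq x).fun_pow 2) |>.congr_deriv ?_
    norm_num
    ring
  have hlim : Tendsto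
      (fun x => 2 * gaussTail x * (gaussTail x + x * exp (-x ^ 2)) - exp (-x ^ 2) ^ 2)
      atTop (𝓝 0) := by
    convert (((tendsto_pow_mul_gaussTail 0).const_mul 2).mul ((tendsto_pow_mul_gaussTail 0).add
      (tendsto_pow_mul_exp_neg_sq 1))).sub ((tendsto_pow_mul_exp_neg_sq 0).pow 2) using 2 <;> simp
  linarith [pos_of_hasDerivAt_neg_of_tendsto_zero hd
    (fun x => by nlinarith [mul_exp_lt_mul_gaussTail x, exp_pos (-x ^ 2)]) hlim x]

lemma one_add_erf_eq (t : ℝ) : 1 + erf t = 2 / √π * gaussTail (-t) := by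
  have hodd : ∫ s in (0 : ℝ)..-t, exp (-s ^ 2) = -∫ s in (0 : ℝ)..t, exp (-s ^ 2) := by
    have h := intervalIntegral.integral_comp_neg (a := 0) (b := t) fun s => exp (-s ^ 2)
    simp only [neg_sq, neg_zero] at h
    rw [intervalIntegral.integral_symm, h]
  have hπ : 0 < √π := sqrt_pos.2 pi_pos
  rw [gaussTail_eq_sub, hodd, erf]
  field_simp
  ring

lemma fErf'_eq (t : ℝ) : fErf' t = exp (-t ^ 2) / gaussTail (-t) := by
  have hπ : 0 < √π := sqrt_pos.2 pi_pos
  have hI := gaussTail_pos (-t)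
  rw [fErf', one_add_erf_eq]
  field_simp

lemma fErf'_zero : fErf' 0 = 2 / √π := by
  simp [fErf', erf]

lemma hasDerivAt_gaussTail_neg (t : ℝ) :
    HasDerivAt (fun t => gaussTail (-t)) (exp (-t ^ 2)) t := by
  simpa [Function.comp_def] using (hasDerivAt_gaussTail (-t)).comp t (hasDerivAt_neg' t)

lemma hasDerivAt_fErf (t : ℝ) : HasDerivAt fErf (fErf' t) t := by
  have hπ : 0 < √π := sqrt_pos.2 pi_pos
  have hI := gaussTail_pos (-t)
  have h : fErf = fun t => log (2 / √π * gaussTail (-t)) := funext fun t => by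
    rw [fErf, one_add_erf_eq]
  rw [h, fErf'_eq]
  refine ((hasDerivAt_gaussTail_neg t).const_mul _).log (by positivity) |>.congr_deriv ?_
  field_simp

noncomputable def fErf'' (t : ℝ) : ℝ := -fErf' t * (fErf' t + 2 * t)

lemma hasDerivAt_fErf' (t : ℝ) : HasDerivAt fErf' (fErf'' t) t := by
  have hI := gaussTail_pos (-t)
  rw [funext fErf'_eq, fErf'', fErf'_eq]
  refine (hasDerivAt_exp_neg_sq t).fun_div (hasDerivAt_gaussTail_neg t) hI.ne' |>.congr_deriv ?_
  field_simp
  ring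

lemma fErf'_pos (t : ℝ) : 0 < fErf' t := by
  rw [fErf'_eq]
  exact div_pos (exp_pos _) (gaussTail_pos _)

lemma fErf'_add_two_mul_pos (t : ℝ) : 0 < fErf' t + 2 * t := by
  have hI := gaussTail_pos (-t)
  have h := two_mul_mul_gaussTail_lt_exp (-t)
  rw [neg_sq] at h
  rw [fErf'_eq, div_add' _ _ _ hI.ne']
  exact div_pos (by linarith) hI

lemma fErf''_neg (t : ℝ) : fErf'' t < 0 := by
  have := mul_pos (fErf'_pos t) (fErf'_add_two_mul_pos t)
  rw [fErf'']
  linarith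

lemma strictAnti_fErf' : StrictAnti fErf' :=
  strictAnti_of_deriv_neg fun t => (hasDerivAt_fErf' t).deriv ▸ fErf''_neg t

lemma one_add_fErf''_div_two_pos (t : ℝ) : 0 < 1 + fErf'' t / 2 := by
  have hI := gaussTail_pos (-t)
  have h := exp_sq_lt_two_mul_gaussTail_mul (-t)
  rw [neg_sq] at h
  rw [fErf'', fErf'_eq]
  field_simp
  nlinarith

lemma hasDerivAt_Eenergy {ν : ℝ} (hν : 0 < ν) (g c : ℝ) :
    HasDerivAt (Eenergy ν g)
      (√(ν / 2) * (√(2 / ν) * g - fErf' (c / √(2 * ν))) * (1 + fErf'' (c / √(2 * ν)) / 2)) c := by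
  set r := √(2 * ν)
  have hr : 0 < r := sqrt_pos.2 (by positivity)
  have hr2 : r ^ 2 = 2 * ν := sq_sqrt (by positivity)
  have hs : √(ν / 2) = r / 2 := by
    rw [show ν / 2 = (r / 2) ^ 2 by rw [div_pow, hr2]; ring, sqrt_sq (by positivity)]
  have ha : √(2 / ν) = 2 / r := by
    rw [show 2 / ν = (2 / r) ^ 2 by rw [div_pow, hr2]; field_simp, sqrt_sq (by positivity)]
  have ht : HasDerivAt (fun c => c / r) (1 / r) c := (hasDerivAt_id' c).div_const r
  have hF := (hasDerivAt_fErf (c / r)).comp c ht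
  have hM := (hasDerivAt_fErf' (c / r)).comp c ht
  refine (((hF.fun_add ((hM.fun_pow 2).const_mul (1 / 4))).const_mul ν).const_sub _).fun_add
    (((hM.const_mul _).fun_add (ht.const_mul r)).const_mul g) |>.congr_deriv ?_
  rw [hs, ha, show ν = r ^ 2 / 2 by rw [hr2]; ring, Function.comp_apply]
  field_simp
  ring

/-- for `g = g_c = √(2ν/π)`, one has `f'(0) = √(2/ν)·g_c`, and `c = 0` is
the unique critical point of the energy `E`. -/
theorem stmt_19 (ν : ℝ) (hν : 0 < ν) :
    fErf' 0 = Real.sqrt (2 / ν) * Real.sqrt (2 * ν / Real.pi)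
    ∧ deriv (Eenergy ν (Real.sqrt (2 * ν / Real.pi))) 0 = 0
    ∧ (∀ c : ℝ, deriv (Eenergy ν (Real.sqrt (2 * ν / Real.pi))) c = 0 → c = 0) := by
  have h0 : fErf' 0 = √(2 / ν) * √(2 * ν / π) := by
    rw [fErf'_zero, ← sqrt_mul (by positivity), show 2 / ν * (2 * ν / π) = 2 ^ 2 / π by
      field_simp, sqrt_div' _ pi_pos.le, sqrt_sq zero_le_two]
  have hE (c : ℝ) : deriv (Eenergy ν √(2 * ν / π)) c =
      √(ν / 2) * (fErf' 0 - fErf' (c / √(2 * ν))) * (1 + fErf'' (c / √(2 * ν)) / 2) := by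
    rw [(hasDerivAt_Eenergy hν _ c).deriv, h0]
  refine ⟨h0, by simp [hE], fun c hc => ?_⟩
  have hs : 0 < √(ν / 2) := sqrt_pos.2 (by positivity)
  rw [hE, mul_eq_zero, mul_eq_zero, sub_eq_zero] at hc
  obtain (hs0 | hc) | h2 := hc
  · exact absurd hs0 hs.ne'
  · have ht := strictAnti_fErf'.injective hc
    rwa [eq_comm, div_eq_zero_iff, or_iff_left (sqrt_pos.2 (by positivity)).ne'] at ht
  · exact absurd h2 (one_add_fErf''_div_two_pos _).ne'
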